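/- Let k ≥ 2 be an integer and let D be a k-quasi-transitive digraph. Then D has a (k+1)-king if and only if D has exactly one initial strong component. -/

import Mathlib

variable {V : Type*}

/-- A directed path of length `n` from `u` to `v` in the digraph with arc relation `A`:
a sequence of `n + 1` pairwise distinct vertices, consecutive ones joined by arcs. -/
def HasPathN (A : V → V → Prop) (u v : V) (n : ℕ) : Prop :=
  ∃ f : Fin (n + 1) → V, Function.Injective f ∧ f 0 = u ∧ f (Fin.last n) = v ∧
    ∀ i : Fin n, A (f i.castSucc) (f i.succ)

/-- The distance from `u` to `v`: the length of a shortest directed path from `u` to `v`,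
`⊤` if there is no such path. -/
noncomputable def ddist (A : V → V → Prop) (u v : V) : ℕ∞ :=
  sInf {n : ℕ∞ | ∃ m : ℕ, n = (m : ℕ∞) ∧ HasPathN A u v m}

/-- `D` is `k`-quasi-transitive if for every directed path `(v_0, …, v_k)` of length `k`,
either `(v_0, v_k)` or `(v_k, v_0)` is an arc. -/
def KQuasiTrans (A : V → V → Prop) (k : ℕ) : Prop :=
  ∀ u v : V, HasPathN A u v k → A u v ∨ A v u

/-- A vertex `v` is an `r`-king if every vertex is within distance `r` from `v`. -/
def IsRKing (A : V → V → Prop) (r : ℕ) (v : V) : Prop :=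
  ∀ u : V, ddist A v u ≤ (r : ℕ∞)

/-- `u` reaches `v` by a directed path. -/
def Reaches (A : V → V → Prop) (u v : V) : Prop :=
  ∃ n : ℕ, HasPathN A u v n

/-- A strong component: the set of all vertices mutually reachable with some vertex. -/
def IsStrongComponent (A : V → V → Prop) (S : Set V) : Prop :=
  ∃ v : V, S = {u | Reaches A u v ∧ Reaches A v u}

/-- An initial strong component: a strong component receiving no arcs from outside. -/
def IsInitialStrongComponent (A : V → V → Prop) (S : Set V) : Prop :=
  IsStrongComponent A S ∧ ∀ u v : V, u ∉ S → v ∈ S → ¬ A u v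

/-- The out-degree of `v` in `D`. -/
noncomputable def outDeg (A : V → V → Prop) (v : V) : ℕ :=
  {u : V | A v u}.ncard

/-- The out-degree of `v` in the subdigraph of `D` induced by `C`. -/
noncomputable def outDegIn (A : V → V → Prop) (C : Set V) (v : V) : ℕ :=
  {u ∈ C | A v u}.ncard

/-- The maximum out-degree of the subdigraph induced by `C`. -/
noncomputable def maxOutDegIn (A : V → V → Prop) (C : Set V) : ℕ :=
  sSup (outDegIn A C '' C)

/-!
If `v` is an `r`-king, the strong component of `v` is initial, and every initial component
contains `v` because `v` reaches it. Conversely, let `x 0 → ⋯ → x n` be a shortest path with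
`n ≥ k + 2` in a `k`-quasi-transitive digraph. The arcs `x (i + k) → x i` exist, since the
opposite arcs would be shortcuts, and feeding them back into `k`-quasi-transitivity pushes the
arc `x n → x (n - k)` down two steps at a time until `x n → x 0` or `x n → x k → x 0`. Hence a
vertex `u` at distance more than `k + 1` from `v` has `d(u, v) ≤ 2`: it lies in the strong
component of `v`, and its `(k+1)`-out-neighbourhood strictly contains that of `v`. So in the unique
initial component, a vertex with the largest `(k+1)`-out-neighbourhood is a `(k+1)`-king.
-/

open Set

def IsWalk (A : V → V → Prop) (x : ℕ → V) (n : ℕ) : Prop :=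
  ∀ i < n, A (x i) (x (i + 1))

def IsGeodesic (A : V → V → Prop) (x : ℕ → V) (n : ℕ) : Prop :=
  IsWalk A x n ∧ ddist A (x 0) (x n) = n

def seqCons (a : V) (x : ℕ → V) : ℕ → V
  | 0 => a
  | i + 1 => x i

section Walks

variable {A : V → V → Prop} {x : ℕ → V} {u v : V} {m n : ℕ}

theorem isWalk_zero : IsWalk A x 0 := fun _ h => absurd h (Nat.not_lt_zero _)

namespace IsWalk

theorem mono (hx : IsWalk A x n) (hm : m ≤ n) : IsWalk A x m :=
  fun i hi => hx i (by omega)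

theorem adj (hx : IsWalk A x n) {i j : ℕ} (hi : i < n) (hj : j = i + 1) : A (x i) (x j) :=
  hj ▸ hx i hi

theorem shift (hx : IsWalk A x n) (i : ℕ) : IsWalk A (fun t => x (i + t)) (n - i) :=
  fun t ht => hx (i + t) (by omega)

theorem seqCons (hx : IsWalk A x n) {a : V} (ha : A a (x 0)) : IsWalk A (seqCons a x) (n + 1)
  | 0, _ => ha
  | i + 1, hi => hx i (by omega)

theorem append {y : ℕ → V} (hx : IsWalk A x m) (hy : IsWalk A y n) (hxy : x m = y 0) :
    IsWalk A (fun t => if t ≤ m then x t else y (t - m)) (m + n) := by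
  intro t ht
  dsimp only
  split_ifs with h₁ h₂ h₂
  · exact hx t (by omega)
  · obtain rfl : t = m := by omega
    rw [hxy]
    exact hy.adj (by omega) (by omega)
  · omega
  · exact hy.adj (by omega) (by omega)

theorem reflTransGen (hx : IsWalk A x n) : Relation.ReflTransGen A (x 0) (x n) := by
  induction n with
  | zero => exact .refl
  | succ n ih => exact (ih (hx.mono n.le_succ)).tail (hx n n.lt_succ_self)

/-- A repeated vertex `x i = x j` lets one cut out the closed walk between `i` and `j`. -/
theorem exists_injOn (hx : IsWalk A x n) :
    ∃ m ≤ n, ∃ y : ℕ → V, y 0 = x 0 ∧ y m = x n ∧ IsWalk A y m ∧ InjOn y (Iic m) := by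
  induction n using Nat.strong_induction_on generalizing x with
  | _ n ih =>
  by_cases hinj : InjOn x (Iic n)
  · exact ⟨n, le_rfl, x, rfl, rfl, hx, hinj⟩
  obtain ⟨i, j, hij, hjn, hxij⟩ : ∃ i j, i < j ∧ j ≤ n ∧ x i = x j := by
    simp only [InjOn, mem_Iic, not_forall] at hinj
    obtain ⟨i, hi, j, hj, h, hne⟩ := hinj
    rcases Nat.lt_or_gt_of_ne hne with hlt | hlt
    exacts [⟨i, j, hlt, hj, h⟩, ⟨j, i, hlt, hi, h.symm⟩]
  have hy := (hx.mono (m := i) (by omega)).append (hx.shift j) (by simpa using hxij)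
  obtain ⟨m, hm, z, hz0, hzm, hz, hzinj⟩ := ih _ (by omega) hy
  refine ⟨m, by omega, z, by simp [hz0], ?_, hz, hzinj⟩
  rw [hzm]
  split_ifs with h
  · rw [show i + (n - j) = i by omega, hxij, show j = n by omega]
  · congr 1
    omega

end IsWalk

theorem injOn_seqCons {a : V} (hx : InjOn x (Iic n)) (ha : ∀ i ≤ n, x i ≠ a) :
    InjOn (seqCons a x) (Iic (n + 1)) := by
  rintro (_ | i) hi (_ | j) hj h
  · rfl
  · exact absurd h.symm (ha j (by simp at hj; omega))
  · exact absurd h (ha i (by simp at hi; omega))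
  · simp only [mem_Iic] at hi hj
    exact congrArg (· + 1) (hx (mem_Iic.2 (by omega)) (mem_Iic.2 (by omega)) h)

theorem hasPathN_of_injOn (hx : IsWalk A x n) (hinj : InjOn x (Iic n)) :
    HasPathN A (x 0) (x n) n :=
  ⟨fun i => x i, fun i j h => Fin.ext (hinj (mem_Iic.2 i.is_le) (mem_Iic.2 j.is_le) h),
    by simp, rfl, fun i => hx i i.isLt⟩

theorem HasPathN.exists_isWalk (h : HasPathN A u v n) :
    ∃ x : ℕ → V, x 0 = u ∧ x n = v ∧ IsWalk A x n := by
  obtain ⟨f, -, h0, hn, hf⟩ := h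
  refine ⟨fun i => f ⟨min i n, by omega⟩, ?_, ?_, fun i hi => ?_⟩
  · convert h0 using 2
    ext
    simp
  · convert hn using 2
    ext
    simp
  · convert hf ⟨i, hi⟩ using 2 <;> ext <;> simp <;> omega

end Walks

section Distance

variable {A : V → V → Prop} {x : ℕ → V} {u v w : V} {n : ℕ}

theorem ddist_le_of_isWalk (hx : IsWalk A x n) : ddist A (x 0) (x n) ≤ n := by
  obtain ⟨m, hm, y, hy0, hym, hy, hinj⟩ := hx.exists_injOn
  calc ddist A (x 0) (x n) ≤ m := sInf_le ⟨m, rfl, hy0 ▸ hym ▸ hasPathN_of_injOn hy hinj⟩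
    _ ≤ n := by exact_mod_cast hm

theorem hasPathN_of_ddist_eq (h : ddist A u v = n) : HasPathN A u v n := by
  have hne : {d : ℕ∞ | ∃ m : ℕ, d = m ∧ HasPathN A u v m}.Nonempty := by
    rw [nonempty_iff_ne_empty]
    intro hempty
    simp [ddist, hempty] at h
  obtain ⟨m, hm, hpath⟩ := csInf_mem hne
  rw [← ddist, h] at hm
  exact (Nat.cast_injective hm) ▸ hpath

theorem exists_isGeodesic (h : ddist A u v = n) :
    ∃ x : ℕ → V, x 0 = u ∧ x n = v ∧ IsGeodesic A x n := by
  obtain ⟨x, rfl, rfl, hx⟩ := (hasPathN_of_ddist_eq h).exists_isWalk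
  exact ⟨x, rfl, rfl, hx, h⟩

theorem reaches_iff_ddist_ne_top : Reaches A u v ↔ ddist A u v ≠ ⊤ := by
  constructor
  · rintro ⟨n, hn⟩
    exact ne_top_of_le_ne_top (ENat.natCast_ne_top n) (sInf_le ⟨n, rfl, hn⟩)
  · intro h
    obtain ⟨n, hn⟩ := ENat.ne_top_iff_exists.mp h
    exact ⟨n, hasPathN_of_ddist_eq hn.symm⟩

theorem reaches_of_ddist_le {m : ℕ} (h : ddist A u v ≤ m) : Reaches A u v :=
  reaches_iff_ddist_ne_top.2 (ne_top_of_le_ne_top (ENat.natCast_ne_top m) h)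

theorem ddist_self (u : V) : ddist A u u = 0 :=
  nonpos_iff_eq_zero.mp (ddist_le_of_isWalk (x := fun _ => u) isWalk_zero)

theorem ddist_le_one_of_adj (h : A u v) : ddist A u v ≤ (1 : ℕ) :=
  ddist_le_of_isWalk ((isWalk_zero (x := fun _ => v)).seqCons h)

theorem ddist_triangle (u v w : V) : ddist A u w ≤ ddist A u v + ddist A v w := by
  by_cases h₁ : ddist A u v = ⊤
  · simp [h₁]
  by_cases h₂ : ddist A v w = ⊤
  · simp [h₂]
  obtain ⟨a, ha⟩ := ENat.ne_top_iff_exists.mp h₁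
  obtain ⟨b, hb⟩ := ENat.ne_top_iff_exists.mp h₂
  obtain ⟨x, rfl, rfl, hx⟩ := exists_isGeodesic ha.symm
  obtain ⟨y, hy0, rfl, hy⟩ := exists_isGeodesic hb.symm
  have := ddist_le_of_isWalk (hx.1.append hy.1 hy0.symm)
  rw [← ha, ← hb]
  convert this using 2
  · simp
  · split_ifs with h
    · obtain rfl : b = 0 := by omega
      simp [hy0]
    · simp
  · norm_cast

theorem ddist_le_of_le_add {a b c : ℕ} (h₁ : ddist A u v ≤ a) (h₂ : ddist A v w ≤ b)
    (h : a + b ≤ c) : ddist A u w ≤ c :=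
  calc ddist A u w ≤ ddist A u v + ddist A v w := ddist_triangle u v w
    _ ≤ a + b := add_le_add h₁ h₂
    _ ≤ c := by exact_mod_cast h

theorem IsWalk.ddist_le {i j : ℕ} (hx : IsWalk A x n) (hij : i ≤ j) (hjn : j ≤ n) :
    ddist A (x i) (x j) ≤ (j - i : ℕ) := by
  simpa [Nat.add_sub_cancel' hij] using
    ddist_le_of_isWalk ((hx.shift i).mono (m := j - i) (by omega))

theorem reaches_iff_reflTransGen : Reaches A u v ↔ Relation.ReflTransGen A u v := by
  rw [reaches_iff_ddist_ne_top]
  constructor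
  · intro h
    obtain ⟨n, hn⟩ := ENat.ne_top_iff_exists.mp h
    obtain ⟨x, rfl, rfl, hx⟩ := exists_isGeodesic hn.symm
    exact hx.1.reflTransGen
  · intro h
    induction h with
    | refl => simp [ddist_self]
    | tail _ hbc ih =>
      obtain ⟨n, hn⟩ := ENat.ne_top_iff_exists.mp ih
      exact ne_top_of_le_ne_top (ENat.natCast_ne_top (n + 1))
        (ddist_le_of_le_add hn.ge (ddist_le_one_of_adj hbc) le_rfl)

namespace IsGeodesic

variable {i j d : ℕ}

theorem le_of_ddist_le (hx : IsGeodesic A x n) (hi : i ≤ n) (hj : j ≤ n)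
    (h : ddist A (x i) (x j) ≤ d) : n ≤ i + d + (n - j) := by
  have h₁ := ddist_le_of_le_add (hx.1.ddist_le (Nat.zero_le i) hi) h le_rfl
  have h₂ := ddist_le_of_le_add h₁ (hx.1.ddist_le hj le_rfl) le_rfl
  rw [hx.2] at h₂
  have := Nat.cast_le.mp h₂
  omega

theorem injOn (hx : IsGeodesic A x n) : InjOn x (Iic n) := by
  intro i hi j hj h
  have h₁ := hx.le_of_ddist_le (d := 0) hi hj (by simp [h, ddist_self])
  have h₂ := hx.le_of_ddist_le (d := 0) hj hi (by simp [h, ddist_self])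
  simp only [mem_Iic] at hi hj
  omega

theorem le_succ_of_adj (hx : IsGeodesic A x n) (hi : i ≤ n) (hj : j ≤ n) (h : A (x i) (x j)) :
    j ≤ i + 1 := by
  have := hx.le_of_ddist_le hi hj (ddist_le_one_of_adj h)
  omega

end IsGeodesic

end Distance

namespace KQuasiTrans

variable {A : V → V → Prop} {k m n : ℕ} {x : ℕ → V} {u v w : V}

theorem adj_or_adj (hqt : KQuasiTrans A k) (hx : IsWalk A x k) (hinj : InjOn x (Iic k)) :
    A (x 0) (x k) ∨ A (x k) (x 0) :=
  hqt _ _ (hasPathN_of_injOn hx hinj)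

theorem adj_or_adj_seqCons {a : V} (hqt : KQuasiTrans A (n + 1)) (hx : IsWalk A x n)
    (hinj : InjOn x (Iic n)) (ha : A a (x 0)) (hne : ∀ i ≤ n, x i ≠ a) :
    A a (x n) ∨ A (x n) a :=
  hqt.adj_or_adj (hx.seqCons ha) (injOn_seqCons hinj hne)

theorem adj_of_isGeodesic (hqt : KQuasiTrans A k) (hk : 2 ≤ k) (hx : IsGeodesic A x n)
    {i j : ℕ} (hij : i + k = j) (hj : j ≤ n) : A (x j) (x i) := by
  have hinj : InjOn (fun t => x (i + t)) (Iic k) := fun a ha b hb h => by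
    simp only [mem_Iic] at ha hb
    have := hx.injOn (mem_Iic.2 (by omega)) (mem_Iic.2 (by omega)) h
    omega
  rcases hqt.adj_or_adj ((hx.1.shift i).mono (by omega)) hinj with h | h
  · have := hx.le_succ_of_adj (i := i) (j := j) (by omega) hj (by simpa [hij] using h)
    omega
  · simpa [hij] using h

/-- The other alternative of `k`-quasi-transitivity, the arc `x (σ l) → x n`, would be a
shortcut of the geodesic. -/
theorem adj_of_adj_of_isWalk {l : ℕ} (hqt : KQuasiTrans A (l + 1)) (hx : IsGeodesic A x n)
    {σ : ℕ → ℕ} (hσ : IsWalk (fun i j => A (x i) (x j)) σ l) (hσinj : InjOn σ (Iic l))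
    (hσn : ∀ t ≤ l, σ t < n) (hend : σ l + 2 ≤ n) (h : A (x n) (x (σ 0))) :
    A (x n) (x (σ l)) := by
  have hinj : InjOn (x ∘ σ) (Iic l) :=
    hx.injOn.comp hσinj fun t ht => mem_Iic.2 (hσn t ht).le
  have hne : ∀ t ≤ l, x (σ t) ≠ x n := fun t ht h =>
    (hσn t ht).ne (hx.injOn (mem_Iic.2 (hσn t ht).le) (mem_Iic.2 le_rfl) h)
  refine (hqt.adj_or_adj_seqCons (x := x ∘ σ) hσ hinj h hne).resolve_right fun h' => ?_
  have := hx.le_succ_of_adj (hσn l le_rfl).le le_rfl h'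
  omega

theorem adj_zero_or_adj_one (hqt : KQuasiTrans A k) (hk : 2 ≤ k) (hx : IsGeodesic A x n)
    (hkn : k < n) {j : ℕ} (hj : j < n) (h : A (x n) (x j)) :
    A (x n) (x 0) ∨ A (x n) (x 1) := by
  induction j using Nat.strong_induction_on with
  | _ j ih =>
  rcases Nat.lt_or_ge j 2 with hj2 | hj2
  · interval_cases j
    exacts [.inl h, .inr h]
  obtain ⟨l, rfl⟩ : ∃ l, k = l + 1 := ⟨k - 1, by omega⟩
  -- go around the cycle `x (m - k) → ⋯ → x m → x (m - k)`, `m = max j k`, from `x j` to `x (j - 2)`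
  have step := hqt.adj_of_adj_of_isWalk hx
    (σ := fun t => if t + j ≤ max j (l + 1) then t + j else t + j - (l + 2))
    (fun t ht => by
      dsimp only
      split_ifs with h₁ h₂ h₂
      · exact hx.1.adj (by omega) (by omega)
      · exact hqt.adj_of_isGeodesic hk hx (by omega) (by omega)
      · omega
      · exact hx.1.adj (by omega) (by omega))
    (fun a ha b hb hab => by
      simp only [mem_Iic] at ha hb
      dsimp only at hab
      split_ifs at hab <;> omega)
    (fun t ht => by split_ifs <;> omega)
    (by split_ifs <;> omega)
    (by simpa using h)
  rw [if_neg (by omega)] at step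
  exact ih _ (by omega) (by omega) step

theorem adj_or_adj_adj (hqt : KQuasiTrans A k) (hk : 2 ≤ k) (hx : IsGeodesic A x n)
    (hn : k + 2 ≤ n) : A (x n) (x 0) ∨ A (x n) (x k) ∧ A (x k) (x 0) := by
  have hback := hqt.adj_of_isGeodesic hk hx (i := n - k) (by omega) le_rfl
  refine (hqt.adj_zero_or_adj_one hk hx (by omega) (by omega) hback).imp_right fun h₁ =>
    ⟨?_, hqt.adj_of_isGeodesic hk hx (zero_add k) (by omega)⟩
  obtain ⟨l, rfl⟩ : ∃ l, k = l + 1 := ⟨k - 1, by omega⟩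
  exact hqt.adj_of_adj_of_isWalk hx (σ := fun t => t + 1) (fun t ht => hx.1 (t + 1) (by omega))
    (fun a _ b _ h => Nat.succ_injective h) (fun t ht => show t + 1 < n by omega)
    (show l + 1 + 2 ≤ n by omega) h₁

theorem ddist_le_two (hqt : KQuasiTrans A k) (hk : 2 ≤ k) (h : ddist A v u = n)
    (hn : k + 2 ≤ n) : ddist A u v ≤ (2 : ℕ) := by
  obtain ⟨x, rfl, rfl, hx⟩ := exists_isGeodesic h
  rcases hqt.adj_or_adj_adj hk hx hn with h₁ | ⟨h₁, h₂⟩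
  · exact (ddist_le_one_of_adj h₁).trans (by norm_num)
  · exact ddist_le_of_le_add (ddist_le_one_of_adj h₁) (ddist_le_one_of_adj h₂) le_rfl

theorem ddist_le_of_adj (hqt : KQuasiTrans A k) (hk : 2 ≤ k) (huv : A u v)
    (hvu : ¬ ddist A v u ≤ k) (hvw : ddist A v w = m) (hm : m ≤ k + 1) :
    ddist A u w ≤ (k + 1 : ℕ) := by
  rcases Nat.lt_or_ge m (k + 1) with hmk | hmk
  · exact ddist_le_of_le_add (ddist_le_one_of_adj huv) hvw.le (by omega)
  obtain ⟨y, rfl, rfl, hy⟩ := exists_isGeodesic hvw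
  obtain ⟨l, rfl⟩ : ∃ l, k = l + 1 := ⟨k - 1, by omega⟩
  have hne : ∀ i ≤ l, y i ≠ u := fun i hi h =>
    hvu (ddist_le_of_le_add (hy.1.ddist_le (Nat.zero_le i) (by omega)) (b := 0)
      (by simp [h, ddist_self]) (by omega))
  rcases hqt.adj_or_adj_seqCons (hy.1.mono (by omega))
      (hy.injOn.mono (Iic_subset_Iic.2 (by omega))) huv hne with h | h
  · exact ddist_le_of_le_add (ddist_le_one_of_adj h) (hy.1.ddist_le (by omega) le_rfl) (by omega)
  · exact absurd (ddist_le_of_le_add (hy.1.ddist_le (Nat.zero_le l) (by omega))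
      (ddist_le_one_of_adj h) (by omega)) hvu

theorem ddist_le_of_adj_adj (hqt : KQuasiTrans A k) (hk : 2 ≤ k) {z : V} (huz : A u z)
    (hzv : A z v) (huv : ¬ A u v) (hvu : ¬ ddist A v u ≤ k) (hvw : ddist A v w = m)
    (hm : m ≤ k + 1) : ddist A u w ≤ (k + 1 : ℕ) := by
  rcases Nat.lt_or_ge m k with hmk | hmk
  · exact ddist_le_of_le_add
      (ddist_le_of_le_add (ddist_le_one_of_adj huz) (ddist_le_one_of_adj hzv) le_rfl) hvw.le
      (by omega)
  obtain ⟨y, rfl, rfl, hy⟩ := exists_isGeodesic hvw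
  by_cases hz : ∃ i, 1 ≤ i ∧ i ≤ m ∧ y i = z
  · obtain ⟨i, hi, him, rfl⟩ := hz
    exact ddist_le_of_le_add (ddist_le_one_of_adj huz) (hy.1.ddist_le him le_rfl) (by omega)
  push Not at hz
  obtain ⟨l, rfl⟩ : ∃ l, k = l + 2 := ⟨k - 2, by omega⟩
  have hzne : ∀ i ≤ l, y i ≠ z
    | 0, _, h => huv (h ▸ huz)
    | i + 1, hi, h => hz (i + 1) (by omega) (by omega) h
  have hune : ∀ i ≤ l + 1, seqCons z y i ≠ u
    | 0, _, h => huv (h ▸ hzv)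
    | i + 1, hi, (h : y i = u) =>
      hvu (ddist_le_of_le_add (hy.1.ddist_le (Nat.zero_le i) (by omega)) (b := 0)
        (by simp [h, ddist_self]) (by omega))
  rcases hqt.adj_or_adj_seqCons ((hy.1.mono (by omega)).seqCons hzv)
      (injOn_seqCons (hy.injOn.mono (Iic_subset_Iic.2 (by omega))) hzne) huz hune with h | h
  · rcases l with _ | l
    · exact absurd h huv
    · exact ddist_le_of_le_add (ddist_le_one_of_adj h) (hy.1.ddist_le (by omega) le_rfl)
        (by omega)
  · exact absurd (ddist_le_of_le_add (hy.1.ddist_le (Nat.zero_le l) (by omega))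
      (ddist_le_one_of_adj h) (by omega)) hvu

theorem ddist_le_of_ddist_eq_of_ddist_le (hqt : KQuasiTrans A k) (hk : 2 ≤ k)
    (hvu : ddist A v u = n) (hn : k + 2 ≤ n) (hvw : ddist A v w ≤ (k + 1 : ℕ)) :
    ddist A u w ≤ (k + 1 : ℕ) := by
  obtain ⟨m, hm⟩ := ENat.ne_top_iff_exists.mp (ne_top_of_le_ne_top (ENat.natCast_ne_top _) hvw)
  have hmk : m ≤ k + 1 := by
    rw [← hm] at hvw
    exact_mod_cast hvw
  have hfar : ¬ ddist A v u ≤ k := by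
    rw [hvu]
    exact_mod_cast (by omega : ¬ n ≤ k)
  obtain ⟨x, rfl, rfl, hx⟩ := exists_isGeodesic hvu
  by_cases h : A (x n) (x 0)
  · exact hqt.ddist_le_of_adj hk h hfar hm.symm hmk
  · obtain ⟨h₁, h₂⟩ := (hqt.adj_or_adj_adj hk hx hn).resolve_left h
    exact hqt.ddist_le_of_adj_adj hk h₁ h₂ h hfar hm.symm hmk

end KQuasiTrans

section Components

variable {A : V → V → Prop} {S : Set V} {u v : V}

theorem Reaches.refl (u : V) : Reaches A u u :=
  reaches_iff_reflTransGen.2 .refl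

theorem Reaches.single (h : A u v) : Reaches A u v :=
  reaches_iff_reflTransGen.2 (.single h)

theorem Reaches.trans {w : V} (h₁ : Reaches A u v) (h₂ : Reaches A v w) : Reaches A u w :=
  reaches_iff_reflTransGen.2 ((reaches_iff_reflTransGen.1 h₁).trans (reaches_iff_reflTransGen.1 h₂))

theorem IsStrongComponent.eq_setOf_of_mem (hS : IsStrongComponent A S) (hv : v ∈ S) :
    S = {u | Reaches A u v ∧ Reaches A v u} := by
  obtain ⟨g, rfl⟩ := hS
  ext u
  exact ⟨fun hu => ⟨hu.1.trans hv.2, hv.1.trans hu.2⟩,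
    fun hu => ⟨hu.1.trans hv.1, hv.2.trans hu.2⟩⟩

theorem IsStrongComponent.nonempty (hS : IsStrongComponent A S) : S.Nonempty := by
  obtain ⟨g, rfl⟩ := hS
  exact ⟨g, .refl g, .refl g⟩

theorem IsInitialStrongComponent.mem_of_reaches (hS : IsInitialStrongComponent A S) (hv : v ∈ S)
    (huv : Reaches A u v) : u ∈ S := by
  rw [reaches_iff_reflTransGen] at huv
  induction huv using Relation.ReflTransGen.head_induction_on with
  | refl => exact hv
  | head hac _ hc => exact by_contra fun ha => hS.2 _ _ ha hc hac

theorem IsRKing.existsUnique_isInitialStrongComponent {r : ℕ} (hv : IsRKing A r v) :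
    ∃! C : Set V, IsInitialStrongComponent A C := by
  have hreach : ∀ u, Reaches A v u := fun u => reaches_of_ddist_le (hv u)
  refine ⟨{u | Reaches A u v ∧ Reaches A v u}, ⟨⟨v, rfl⟩, fun p q hp hq hpq => ?_⟩, fun S hS => ?_⟩
  · exact hp ⟨(Reaches.single hpq).trans hq.1, hreach p⟩
  · obtain ⟨g, hg⟩ := hS.1.nonempty
    exact hS.1.eq_setOf_of_mem (hS.mem_of_reaches hg (hreach g))

/-- A vertex `w` reaching `u` whose set of ancestors is smallest spans an initial component. -/
theorem exists_isInitialStrongComponent_forall_reaches [Finite V] (A : V → V → Prop) (u : V) :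
    ∃ S, IsInitialStrongComponent A S ∧ ∀ w ∈ S, Reaches A w u := by
  obtain ⟨w, hwu, hmin⟩ := Set.exists_min_image {w | Reaches A w u}
    (fun w => {p | Reaches A p w}.ncard) (toFinite _) ⟨u, .refl u⟩
  refine ⟨{p | Reaches A p w ∧ Reaches A w p}, ⟨⟨w, rfl⟩, fun p q hp hq hpq => ?_⟩,
    fun p hp => hp.1.trans hwu⟩
  have hpw : Reaches A p w := (Reaches.single hpq).trans hq.1
  have hlt : {a | Reaches A a p}.ncard < {a | Reaches A a w}.ncard :=
    ncard_lt_ncard ⟨fun a ha => ha.trans hpw, fun h => hp ⟨hpw, h (.refl w)⟩⟩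
  exact (hmin p (hpw.trans hwu)).not_gt hlt

end Components

theorem kqt_king_iff_unique_initial_general
    [Fintype V] (A : V → V → Prop)
    (k : ℕ) (hk : 2 ≤ k) (hqt : KQuasiTrans A k) :
    (∃ v : V, IsRKing A (k + 1) v) ↔
      (∃! C : Set V, IsInitialStrongComponent A C) := by
  refine ⟨fun ⟨v, hv⟩ => hv.existsUnique_isInitialStrongComponent, fun ⟨C, hC, hCuniq⟩ => ?_⟩
  have hreach : ∀ w ∈ C, ∀ u, Reaches A w u := fun w hw u => by
    obtain ⟨S, hS, hSu⟩ := exists_isInitialStrongComponent_forall_reaches A u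
    exact hSu w (hCuniq S hS ▸ hw)
  let N : V → Set V := fun z => {w | ddist A z w ≤ (k + 1 : ℕ)}
  obtain ⟨v, hvC, hvmax⟩ := C.exists_max_image (fun z => (N z).ncard) C.toFinite hC.1.nonempty
  refine ⟨v, fun u => by_contra fun hvu => ?_⟩
  obtain ⟨n, hn⟩ := ENat.ne_top_iff_exists.mp (reaches_iff_ddist_ne_top.1 (hreach v hvC u))
  have hkn : k + 2 ≤ n := by
    by_contra! h
    exact hvu (hn ▸ by exact_mod_cast (by omega : n ≤ k + 1))
  have huC : u ∈ C := by
    rw [hC.1.eq_setOf_of_mem hvC]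
    exact ⟨reaches_of_ddist_le (hqt.ddist_le_two hk hn.symm hkn), hreach v hvC u⟩
  have hsub : N v ⊂ N u :=
    ⟨fun w => hqt.ddist_le_of_ddist_eq_of_ddist_le hk hn.symm hkn,
      fun h => hvu (h (by simp [N, ddist_self]))⟩
  exact (hvmax u huC).not_gt (ncard_lt_ncard hsub)

/-- A `k`-quasi-transitive digraph has a `(k+1)`-king iff it has exactly one
initial strong component. -/
theorem kqt_king_iff_unique_initial
    [Fintype V] (A : V → V → Prop) (hloop : ∀ v : V, ¬ A v v)
    (k : ℕ) (hk : 2 ≤ k) (hqt : KQuasiTrans A k) :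
    (∃ v : V, IsRKing A (k + 1) v) ↔
      (∃! C : Set V, IsInitialStrongComponent A C) :=
  kqt_king_iff_unique_initial_general A k hk hqt
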